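/- Let p(ν | y) = ∏_{c} y_c^{ν(c)} (1-y_c)^{1-ν(c)} over Boolean assignments ν : Fin n → {0,1}, with each y_c ∈ (0,1). Let K be a satisfiable set of assignments (a nonempty subset of assignments) and define the semantic loss L(y) = -log Σ_{ν ∈ K} p(ν | y). Then ∂L/∂y_c = (y_c - E[ν(c) | K, y]) / (y_c(1-y_c)), where E[ν(c) | K, y] = (Σ_{ν ∈ K} p(ν|y)·ν(c)) / (Σ_{ν ∈ K} p(ν|y)). -/

import Mathlib

/-!
In the coordinate `y c` each likelihood `p(ν | y)` is affine, equal to `y c` or `1 - y c` times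
a factor independent of `y c`; hence its partial derivative is the score
`p(ν | y) (ν(c) - y c) / (y c (1 - y c))`. Summing over `K` and applying the chain rule to `-log`
gives the gradient, the sum being positive because `K` is nonempty and every `y c ∈ (0, 1)`.
-/

open Finset

/-- Bernoulli likelihood `p(ν | y) = ∏_c y_c^{ν(c)} (1-y_c)^{1-ν(c)}`. -/
noncomputable def bernLik {n : ℕ} (y : Fin n → ℝ) (ν : Fin n → Bool) : ℝ :=
  ∏ c, (y c) ^ (if ν c then 1 else 0 : ℕ) * (1 - y c) ^ (1 - (if ν c then 1 else 0) : ℕ)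

/-- Semantic loss `L(y) = -log Σ_{ν ∈ K} p(ν | y)`. -/
noncomputable def semLoss {n : ℕ} (K : Finset (Fin n → Bool)) (y : Fin n → ℝ) : ℝ :=
  -Real.log (∑ ν ∈ K, bernLik y ν)

theorem fderiv_apply_single_eq_of_hasDerivAt_update {ι 𝕜 F : Type*} [Fintype ι]
    [DecidableEq ι] [NontriviallyNormedField 𝕜] [NormedAddCommGroup F] [NormedSpace 𝕜 F]
    {f : (ι → 𝕜) → F} {x : ι → 𝕜} {i : ι} {f' : F} (hf : DifferentiableAt 𝕜 f x)
    (h : HasDerivAt (fun t ↦ f (Function.update x i t)) f' (x i)) :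
    fderiv 𝕜 f x (Pi.single i 1) = f' := by
  have hf' : HasFDerivAt f (fderiv 𝕜 f x) (Function.update x i (x i)) := by
    rw [Function.update_eq_self]
    exact hf.hasFDerivAt
  exact (hf'.comp_hasDerivAt (x i) (hasDerivAt_update x i (x i))).unique h

namespace bernLik

variable {n : ℕ}

theorem eq_prod_ite (y : Fin n → ℝ) (ν : Fin n → Bool) :
    bernLik y ν = ∏ c, if ν c then y c else 1 - y c :=
  prod_congr rfl fun c _ ↦ by cases ν c <;> simp

theorem pos {y : Fin n → ℝ} (hy : ∀ c, y c ∈ Set.Ioo (0 : ℝ) 1) (ν : Fin n → Bool) :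
    0 < bernLik y ν := by
  rw [eq_prod_ite]
  refine prod_pos fun c _ ↦ ?_
  obtain ⟨h0, h1⟩ := hy c
  split_ifs <;> linarith

theorem differentiable (ν : Fin n → Bool) : Differentiable ℝ (bernLik · ν) := by
  unfold bernLik
  fun_prop

theorem update_eq_mul (y : Fin n → ℝ) (ν : Fin n → Bool) (c : Fin n) (t : ℝ) :
    bernLik (Function.update y c t) ν =
      (∏ d ∈ univ.erase c, if ν d then y d else 1 - y d) * if ν c then t else 1 - t := by
  rw [eq_prod_ite, ← prod_erase_mul univ _ (mem_univ c), Function.update_self]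
  congr 1
  exact prod_congr rfl fun d hd ↦ by rw [Function.update_of_ne (ne_of_mem_erase hd)]

theorem hasDerivAt_update {y : Fin n → ℝ} {c : Fin n} (hc : y c ∈ Set.Ioo (0 : ℝ) 1)
    (ν : Fin n → Bool) :
    HasDerivAt (fun t ↦ bernLik (Function.update y c t) ν)
      (bernLik y ν * ((if ν c then 1 else 0) - y c) / (y c * (1 - y c))) (y c) := by
  obtain ⟨h0, h1⟩ := hc
  set P := ∏ d ∈ univ.erase c, if ν d then y d else 1 - y d
  have hP : bernLik y ν = P * if ν c then y c else 1 - y c := by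
    rw [← update_eq_mul, Function.update_eq_self]
  have hlin : HasDerivAt (fun t ↦ P * if ν c then t else 1 - t)
      (P * if ν c then 1 else -1) (y c) := by
    cases ν c
    · simpa using ((hasDerivAt_id (y c)).const_sub 1).const_mul P
    · simpa using (hasDerivAt_id (y c)).const_mul P
  convert hlin using 1
  · exact funext (update_eq_mul y ν c)
  · have : 1 - y c ≠ 0 := by linarith
    rw [hP]
    cases ν c <;> simp <;> field_simp

end bernLik

/-- Gradient of the semantic loss:
`∂L/∂y_c = (y_c - E[ν(c) | K, y]) / (y_c (1 - y_c))`. -/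
theorem semLoss_partial {n : ℕ} (K : Finset (Fin n → Bool)) (hK : K.Nonempty)
    (y : Fin n → ℝ) (hy : ∀ c, y c ∈ Set.Ioo (0 : ℝ) 1) (c : Fin n) :
    fderiv ℝ (semLoss K) y (Pi.single c 1) =
      (y c - (∑ ν ∈ K, bernLik y ν * (if ν c then 1 else 0)) / (∑ ν ∈ K, bernLik y ν)) /
        (y c * (1 - y c)) := by
  set S := ∑ ν ∈ K, bernLik y ν
  set N := ∑ ν ∈ K, bernLik y ν * (if ν c then 1 else 0)
  have hS : S ≠ 0 := (sum_pos (fun ν _ ↦ bernLik.pos hy ν) hK).ne'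
  have hdiff : DifferentiableAt ℝ (semLoss K) y :=
    ((Differentiable.fun_sum fun ν _ ↦ bernLik.differentiable ν) y |>.log hS).neg
  have hsum : HasDerivAt (fun t ↦ ∑ ν ∈ K, bernLik (Function.update y c t) ν)
      ((N - y c * S) / (y c * (1 - y c))) (y c) := by
    refine (HasDerivAt.fun_sum fun ν _ ↦ bernLik.hasDerivAt_update (hy c) ν).congr_deriv ?_
    rw [← sum_div, mul_sum, ← sum_sub_distrib]
    exact congrArg (· / _) (sum_congr rfl fun ν _ ↦ by ring)
  have hsemLoss := hsum.log (by rwa [Function.update_eq_self]) |>.neg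
  rw [Function.update_eq_self] at hsemLoss
  rw [fderiv_apply_single_eq_of_hasDerivAt_update hdiff hsemLoss]
  show -((N - y c * S) / (y c * (1 - y c)) / S) = (y c - N / S) / (y c * (1 - y c))
  obtain ⟨h0, h1⟩ := hy c
  have : 1 - y c ≠ 0 := by linarith
  field_simp
  ring
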